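/- For every k ≥ 1 there exists a continuous path u: [0,1] → M_k(ℂ) ⊗ M_k(ℂ) such that u_t is unitary for every t, u_0 = 1, u_1 = ∑_{i,j=1}^{k} e_{i,j} ⊗ e_{j,i} (the flip unitary), and u_t commutes with z ⊗ z for every z ∈ M_k(ℂ) and every t ∈ [0,1]. -/

import Mathlib

open scoped Kronecker

/-!
The flip `F` is a self-adjoint unitary, so `a ↦ P₊ + a • P₋` (with `P±` its spectral projections)
is a multiplicative, `star`-preserving map `ℂ → M_k ⊗ M_k` sending `1 ↦ 1` and `-1 ↦ F`; along the
half circle `e^{iπt}` it gives a unitary path from `1` to `F`. Each `z ⊗ z` is invariant under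
conjugation by the flip, hence commutes with `F` and with every point of the path.
-/

theorem Complex.exp_ofReal_mul_I_mem_unitary (x : ℝ) : Complex.exp (x * Complex.I) ∈ unitary ℂ := by
  rw [Unitary.mem_iff, Complex.star_def, Complex.mul_conj', Complex.conj_mul',
    Complex.norm_exp_ofReal_mul_I]
  norm_num

section SpectralScale

variable {A : Type*} [Ring A] [Algebra ℂ A]

/-- `P₊ + a • P₋`, where `P± = (1 ± F) / 2` are the eigenprojections when `F` is an involution. -/
noncomputable def spectralScale (F : A) (a : ℂ) : A :=
  ((1 + a) / 2) • 1 + ((1 - a) / 2) • F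

@[simp]
theorem spectralScale_one (F : A) : spectralScale F 1 = 1 := by
  simp [spectralScale]

@[simp]
theorem spectralScale_neg_one (F : A) : spectralScale F (-1) = F := by
  norm_num [spectralScale]

theorem spectralScale_mul {F : A} (hF : F * F = 1) (a b : ℂ) :
    spectralScale F a * spectralScale F b = spectralScale F (a * b) := by
  simp only [spectralScale, add_mul, mul_add, smul_mul_smul, one_mul, mul_one, hF]
  module

theorem Commute.spectralScale_left {F x : A} (h : Commute F x) (a : ℂ) :
    Commute (spectralScale F a) x :=
  ((Commute.one_left x).smul_left _).add_left (h.smul_left _)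

theorem continuous_spectralScale [TopologicalSpace A] [ContinuousAdd A] [ContinuousSMul ℂ A]
    (F : A) : Continuous (spectralScale F) := by
  unfold spectralScale
  fun_prop

variable [StarRing A] [StarModule ℂ A]

theorem star_spectralScale {F : A} (hF : IsSelfAdjoint F) (a : ℂ) :
    star (spectralScale F a) = spectralScale F (star a) := by
  simp [spectralScale, hF.star_eq]

theorem spectralScale_mem_unitary {F : A} (hF : IsSelfAdjoint F) (hF2 : F * F = 1) {a : ℂ}
    (ha : a ∈ unitary ℂ) : spectralScale F a ∈ unitary A := by
  rw [Unitary.mem_iff, star_spectralScale hF, spectralScale_mul hF2, spectralScale_mul hF2,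
    Unitary.star_mul_self_of_mem ha, Unitary.mul_star_self_of_mem ha, spectralScale_one]
  exact ⟨rfl, rfl⟩

end SpectralScale

theorem Equiv.prodComm_mul_self (n : Type*) :
    (Equiv.prodComm n n : Equiv.Perm (n × n)) * Equiv.prodComm n n = 1 :=
  Equiv.ext Prod.swap_swap

namespace Matrix

section Permutation

variable {n R : Type*} [DecidableEq n]

theorem isSelfAdjoint_permMatrix_of_involutive [NonAssocSemiring R] [StarRing R]
    {σ : Equiv.Perm n} (hσ : σ * σ = 1) : IsSelfAdjoint (σ.permMatrix R) := by
  rw [IsSelfAdjoint, star_eq_conjTranspose, conjTranspose_permMatrix, inv_eq_of_mul_eq_one_left hσ]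

variable [Fintype n]

theorem permMatrix_mul_self_of_involutive [NonAssocSemiring R] {σ : Equiv.Perm n}
    (hσ : σ * σ = 1) : σ.permMatrix R * σ.permMatrix R = 1 := by
  rw [← permMatrix_mul, hσ, permMatrix_one]

theorem commute_permMatrix_of_submatrix_eq [NonAssocSemiring R] {σ : Equiv.Perm n}
    {M : Matrix n n R} (h : M.submatrix σ σ = M) : Commute (σ.permMatrix R) M := by
  unfold Commute SemiconjBy
  conv_rhs => rw [← h]
  rw [PEquiv.toMatrix_toPEquiv_mul, PEquiv.mul_toMatrix_toPEquiv, submatrix_submatrix]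
  simp

end Permutation

section KroneckerFlip

variable (n R : Type*)

noncomputable def kroneckerFlip [DecidableEq n] [Zero R] [One R] : Matrix (n × n) (n × n) R :=
  Equiv.Perm.permMatrix R (Equiv.prodComm n n)

theorem sum_single_kronecker_single_eq_kroneckerFlip [DecidableEq n] [Fintype n] [Semiring R] :
    ∑ i : n, ∑ j : n, single i j (1 : R) ⊗ₖ single j i (1 : R) = kroneckerFlip n R := by
  ext ⟨a, b⟩ ⟨c, d⟩
  simp [kroneckerFlip, single_kronecker_single, sum_apply, single_apply, PEquiv.toMatrix_apply,
    ite_and, eq_comm]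

variable {n R}

theorem kronecker_submatrix_prodComm [CommMagma R] (A B : Matrix n n R) :
    (A ⊗ₖ B).submatrix (Equiv.prodComm n n) (Equiv.prodComm n n) = B ⊗ₖ A := by
  ext ⟨i, j⟩ ⟨k, l⟩
  exact mul_comm _ _

end KroneckerFlip

end Matrix

theorem exists_unitary_path_to_flip_commuting_with_symmetric (k : ℕ) :
    ∃ u : ℝ → Matrix (Fin k × Fin k) (Fin k × Fin k) ℂ,
      ContinuousOn u (Set.Icc 0 1) ∧
      (∀ t ∈ Set.Icc (0 : ℝ) 1, u t ∈ Matrix.unitaryGroup (Fin k × Fin k) ℂ) ∧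
      u 0 = 1 ∧
      (u 1 = ∑ i : Fin k, ∑ j : Fin k,
        Matrix.single i j (1 : ℂ) ⊗ₖ Matrix.single j i (1 : ℂ)) ∧
      (∀ z : Matrix (Fin k) (Fin k) ℂ, ∀ t ∈ Set.Icc (0 : ℝ) 1,
        u t * (z ⊗ₖ z) = (z ⊗ₖ z) * u t) := by
  set F := Matrix.kroneckerFlip (Fin k) ℂ
  have hσ := Equiv.prodComm_mul_self (Fin k)
  refine ⟨fun t => spectralScale F (Complex.exp (↑(Real.pi * t) * Complex.I)),
    ((continuous_spectralScale F).comp (by fun_prop)).continuousOn, fun t _ => ?_, by simp, ?_,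
    fun z t _ => ?_⟩
  · exact spectralScale_mem_unitary (Matrix.isSelfAdjoint_permMatrix_of_involutive hσ)
      (Matrix.permMatrix_mul_self_of_involutive hσ) (Complex.exp_ofReal_mul_I_mem_unitary _)
  · simp [F, Matrix.sum_single_kronecker_single_eq_kroneckerFlip, Complex.exp_pi_mul_I]
  · have hFz : Commute F (z ⊗ₖ z) :=
      Matrix.commute_permMatrix_of_submatrix_eq (Matrix.kronecker_submatrix_prodComm z z)
    exact (hFz.spectralScale_left _).eq
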